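/- arXiv:1301.5573 — 2 statements merged into one kernel-verified Lean document; each statement's English description precedes it below -/
import Mathlib

section
/- Let R be an associative ring with unity and let (M_i)_{i ∈ I} be a family of Ding projective left R-modules. Then the direct sum ⊕_{i ∈ I} M_i is Ding projective. -/
universe u

open scoped TensorProduct DirectSum

/-- The subgroup of `E ⊗[ℤ] F` by which one quotients to obtain the balanced tensor
product `E ⊗_R F` of a right `R`-module `E` and a left `R`-module `F`. -/
def balancedSub (R : Type u) [Ring R] (E F : Type u) [AddCommGroup E] [Module Rᵐᵒᵖ E]
    [AddCommGroup F] [Module R F] : Submodule ℤ (TensorProduct ℤ E F) :=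
  Submodule.span ℤ
    {x | ∃ (r : R) (e : E) (f : F),
      x = (MulOpposite.op r • e) ⊗ₜ[ℤ] f - e ⊗ₜ[ℤ] (r • f)}

/-- The tensor product `E ⊗_R F` of a right `R`-module `E` and a left `R`-module `F`
over a possibly noncommutative ring `R`, realized as a quotient of `E ⊗[ℤ] F`. -/
def ModTensor (R : Type u) [Ring R] (E F : Type u) [AddCommGroup E] [Module Rᵐᵒᵖ E]
    [AddCommGroup F] [Module R F] : Type u :=
  TensorProduct ℤ E F ⧸ balancedSub R E F

noncomputable instance (R : Type u) [Ring R] (E F : Type u) [AddCommGroup E] [Module Rᵐᵒᵖ E]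
    [AddCommGroup F] [Module R F] : AddCommGroup (ModTensor R E F) :=
  inferInstanceAs (AddCommGroup (TensorProduct ℤ E F ⧸ balancedSub R E F))

/-- The map `E ⊗_R F → E' ⊗_R F` induced by a map `g : E → E'` of right `R`-modules. -/
noncomputable def ModTensor.mapLeft (R : Type u) [Ring R] {E E' : Type u} [AddCommGroup E]
    [Module Rᵐᵒᵖ E] [AddCommGroup E'] [Module Rᵐᵒᵖ E'] (F : Type u) [AddCommGroup F]
    [Module R F] (g : E →ₗ[Rᵐᵒᵖ] E') : ModTensor R E F →ₗ[ℤ] ModTensor R E' F :=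
  Submodule.mapQ (balancedSub R E F) (balancedSub R E' F)
    (TensorProduct.map (g.restrictScalars ℤ) LinearMap.id)
    (by
      rw [balancedSub, Submodule.span_le]
      rintro x ⟨r, e, f, rfl⟩
      refine Submodule.subset_span ⟨r, g e, f, ?_⟩
      erw [map_sub, TensorProduct.map_tmul, TensorProduct.map_tmul]
      simp)

/-- The map `E ⊗_R F → E ⊗_R F'` induced by a map `f : F → F'` of left `R`-modules. -/
noncomputable def ModTensor.mapRight (R : Type u) [Ring R] (E : Type u) [AddCommGroup E]
    [Module Rᵐᵒᵖ E] {F F' : Type u} [AddCommGroup F] [Module R F] [AddCommGroup F']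
    [Module R F'] (f : F →ₗ[R] F') : ModTensor R E F →ₗ[ℤ] ModTensor R E F' :=
  Submodule.mapQ (balancedSub R E F) (balancedSub R E F')
    (TensorProduct.map LinearMap.id (f.restrictScalars ℤ))
    (by
      rw [balancedSub, Submodule.span_le]
      rintro x ⟨r, e, y, rfl⟩
      refine Submodule.subset_span ⟨r, e, f y, ?_⟩
      erw [map_sub, TensorProduct.map_tmul, TensorProduct.map_tmul]
      simp)

/-- A left module `F` over a (possibly noncommutative) ring `R` is flat if tensoring
with `F` preserves injectivity of maps of right `R`-modules. -/
def IsFlatModule (R : Type u) [Ring R] (F : Type u) [AddCommGroup F] [Module R F] : Prop :=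
  ∀ (E E' : Type u) [AddCommGroup E] [Module Rᵐᵒᵖ E] [AddCommGroup E'] [Module Rᵐᵒᵖ E']
    (g : E →ₗ[Rᵐᵒᵖ] E'), Function.Injective g →
      Function.Injective (ModTensor.mapLeft R F g)

/-- `Ext^i_R(M, L) = 0`, expressed using the `Ext` functor on the category of left
`R`-modules (with its `ℤ`-linear structure). -/
def ExtIsZero (R : Type u) [Ring R] (i : ℕ) (M L : Type u) [AddCommGroup M] [Module R M]
    [AddCommGroup L] [Module R L] : Prop :=
  Subsingleton ((((_root_.Ext ℤ (ModuleCat.{u} R) i).obj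
    (Opposite.op (ModuleCat.of R M))).obj (ModuleCat.of R L)) : Type u)

/-- `FlatDimLE R n L` means the left `R`-module `L` admits a flat resolution of
length at most `n`. -/
def FlatDimLE (R : Type u) [Ring R] : ℕ → ModuleCat.{u} R → Prop
  | 0, L => IsFlatModule R L
  | n + 1, L =>
    ∃ (F K : ModuleCat.{u} R) (ι : (K : Type u) →ₗ[R] F) (π : (F : Type u) →ₗ[R] L),
      IsFlatModule R F ∧ Function.Injective ι ∧ Function.Surjective π ∧
      Function.Exact ι π ∧ FlatDimLE R n K

/-- A left `R`-module `L` has finite flat dimension if it admits a finite resolution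
by flat modules. -/
def HasFiniteFlatDimension (R : Type u) [Ring R] (L : Type u) [AddCommGroup L]
    [Module R L] : Prop :=
  ∃ n : ℕ, FlatDimLE R n (ModuleCat.of R L)

/-- A left `R`-module `M` is Ding projective if there is an exact sequence
`⋯ → P₁ → P₀ → P₋₁ → P₋₂ → ⋯` of projective modules with `M ≅ ker (P₀ → P₋₁)`
which stays exact under `Hom_R(-, F)` for every flat module `F`. -/
def IsDingProjective (R : Type u) [Ring R] (M : Type u) [AddCommGroup M] [Module R M] : Prop :=
  ∃ (P : ℤ → ModuleCat.{u} R) (d : ∀ n : ℤ, (P (n + 1) : Type u) →ₗ[R] P n),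
    (∀ n, Module.Projective R (P n)) ∧
    (∀ n, Function.Exact (d (n + 1)) (d n)) ∧
    (∀ (F : Type u) [AddCommGroup F] [Module R F], IsFlatModule R F →
      ∀ n : ℤ, Function.Exact
        (fun g : (P n : Type u) →ₗ[R] F => g ∘ₗ d n)
        (fun g : (P (n + 1) : Type u) →ₗ[R] F => g ∘ₗ d (n + 1))) ∧
    Nonempty (M ≃ₗ[R] LinearMap.ker (d (-1)))

/-- A left `R`-module `M` is two-degree Ding projective if there is an exact sequence
`⋯ → D₁ → D₀ → D₋₁ → D₋₂ → ⋯` of Ding projective modules with `M ≅ ker (D₀ → D₋₁)`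
which stays exact under `Hom_R(-, F)` for every flat module `F`. -/
def IsTwoDegreeDingProjective (R : Type u) [Ring R] (M : Type u) [AddCommGroup M]
    [Module R M] : Prop :=
  ∃ (D : ℤ → ModuleCat.{u} R) (d : ∀ n : ℤ, (D (n + 1) : Type u) →ₗ[R] D n),
    (∀ n, IsDingProjective R (D n)) ∧
    (∀ n, Function.Exact (d (n + 1)) (d n)) ∧
    (∀ (F : Type u) [AddCommGroup F] [Module R F], IsFlatModule R F →
      ∀ n : ℤ, Function.Exact
        (fun g : (D n : Type u) →ₗ[R] F => g ∘ₗ d n)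
        (fun g : (D (n + 1) : Type u) →ₗ[R] F => g ∘ₗ d (n + 1))) ∧
    Nonempty (M ≃ₗ[R] LinearMap.ker (d (-1)))

/-- A left `R`-module `M` is strongly two-degree Ding projective if there is an exact
sequence `⋯ →f D →f D →f D →f ⋯` with `D` Ding projective and a single map `f`, with
`M ≅ ker f`, which stays exact under `Hom_R(-, F)` for every flat module `F`. -/
def IsStronglyTwoDegreeDingProjective (R : Type u) [Ring R] (M : Type u) [AddCommGroup M]
    [Module R M] : Prop :=
  ∃ (D : ModuleCat.{u} R) (f : (D : Type u) →ₗ[R] D),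
    IsDingProjective R D ∧
    Function.Exact f f ∧
    (∀ (F : Type u) [AddCommGroup F] [Module R F], IsFlatModule R F →
      Function.Exact
        (fun g : (D : Type u) →ₗ[R] F => g ∘ₗ f)
        (fun g : (D : Type u) →ₗ[R] F => g ∘ₗ f)) ∧
    Nonempty (M ≃ₗ[R] LinearMap.ker f)

/-- A left `R`-module `M` is Gorenstein projective if there is an exact sequence
`⋯ → P₁ → P₀ → P₋₁ → P₋₂ → ⋯` of projective modules with `M ≅ ker (P₀ → P₋₁)`
which stays exact under `Hom_R(-, Q)` for every projective module `Q`. -/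
def IsGorensteinProjective (R : Type u) [Ring R] (M : Type u) [AddCommGroup M]
    [Module R M] : Prop :=
  ∃ (P : ℤ → ModuleCat.{u} R) (d : ∀ n : ℤ, (P (n + 1) : Type u) →ₗ[R] P n),
    (∀ n, Module.Projective R (P n)) ∧
    (∀ n, Function.Exact (d (n + 1)) (d n)) ∧
    (∀ (Q : Type u) [AddCommGroup Q] [Module R Q], Module.Projective R Q →
      ∀ n : ℤ, Function.Exact
        (fun g : (P n : Type u) →ₗ[R] Q => g ∘ₗ d n)
        (fun g : (P (n + 1) : Type u) →ₗ[R] Q => g ∘ₗ d (n + 1))) ∧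
    Nonempty (M ≃ₗ[R] LinearMap.ker (d (-1)))

/-- A left `R`-module `H` is Gorenstein flat if there is an exact sequence
`⋯ → F₁ → F₀ → F₋₁ → F₋₂ → ⋯` of flat modules with `H ≅ ker (F₀ → F₋₁)` which stays
exact under `E ⊗_R -` for every injective right `R`-module `E`. -/
def IsGorensteinFlat (R : Type u) [Ring R] (H : Type u) [AddCommGroup H] [Module R H] : Prop :=
  ∃ (F : ℤ → ModuleCat.{u} R) (d : ∀ n : ℤ, (F (n + 1) : Type u) →ₗ[R] F n),
    (∀ n, IsFlatModule R (F n)) ∧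
    (∀ n, Function.Exact (d (n + 1)) (d n)) ∧
    (∀ (E : Type u) [AddCommGroup E] [Module Rᵐᵒᵖ E], Module.Injective Rᵐᵒᵖ E →
      ∀ n : ℤ, Function.Exact
        (ModTensor.mapRight R E (d (n + 1)))
        (ModTensor.mapRight R E (d n))) ∧
    Nonempty (H ≃ₗ[R] LinearMap.ker (d (-1)))

/-- A left `R`-module `E` is FP-injective if `Ext¹_R(F, E) = 0` for every finitely
presented module `F`. -/
def IsFPInjective (R : Type u) [Ring R] (E : Type u) [AddCommGroup E] [Module R E] : Prop :=
  ∀ (F : Type u) [AddCommGroup F] [Module R F], Module.FinitePresentation R F →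
    ExtIsZero R 1 F E

/-- A left `R`-module `M` is Ding injective if there is an exact sequence
`⋯ → E₁ → E₀ → E₋₁ → E₋₂ → ⋯` of injective modules with `M ≅ ker (E₀ → E₋₁)`
which stays exact under `Hom_R(H, -)` for every FP-injective module `H`. -/
def IsDingInjective (R : Type u) [Ring R] (M : Type u) [AddCommGroup M] [Module R M] : Prop :=
  ∃ (E : ℤ → ModuleCat.{u} R) (d : ∀ n : ℤ, (E (n + 1) : Type u) →ₗ[R] E n),
    (∀ n, Module.Injective R (E n)) ∧
    (∀ n, Function.Exact (d (n + 1)) (d n)) ∧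
    (∀ (H : Type u) [AddCommGroup H] [Module R H], IsFPInjective R H →
      ∀ n : ℤ, Function.Exact
        (fun g : H →ₗ[R] (E (n + 1 + 1) : Type u) => d (n + 1) ∘ₗ g)
        (fun g : H →ₗ[R] (E (n + 1) : Type u) => d n ∘ₗ g)) ∧
    Nonempty (M ≃ₗ[R] LinearMap.ker (d (-1)))

/-- A left `R`-module `M` is two-degree Ding injective if there is an exact sequence
`⋯ → D₁ → D₀ → D₋₁ → D₋₂ → ⋯` of Ding injective modules with `M ≅ ker (D₀ → D₋₁)`
which stays exact under `Hom_R(H, -)` for every FP-injective module `H`. -/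
def IsTwoDegreeDingInjective (R : Type u) [Ring R] (M : Type u) [AddCommGroup M]
    [Module R M] : Prop :=
  ∃ (D : ℤ → ModuleCat.{u} R) (d : ∀ n : ℤ, (D (n + 1) : Type u) →ₗ[R] D n),
    (∀ n, IsDingInjective R (D n)) ∧
    (∀ n, Function.Exact (d (n + 1)) (d n)) ∧
    (∀ (H : Type u) [AddCommGroup H] [Module R H], IsFPInjective R H →
      ∀ n : ℤ, Function.Exact
        (fun g : H →ₗ[R] (D (n + 1 + 1) : Type u) => d (n + 1) ∘ₗ g)
        (fun g : H →ₗ[R] (D (n + 1) : Type u) => d n ∘ₗ g)) ∧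
    Nonempty (M ≃ₗ[R] LinearMap.ker (d (-1)))

/-! Splice complete resolutions together: if `Pᵢ` is a complete projective resolution of `Mᵢ`,
then `⨁ᵢ Pᵢ` is one of `⨁ᵢ Mᵢ`. It is exact with kernel `⨁ᵢ ker dᵢ` because exactness and
kernels of direct sums are computed componentwise, and it stays exact under `Hom_R(-, F)`
because `Hom_R(⨁ᵢ Cᵢ, F) = ∏ᵢ Hom_R(Cᵢ, F)`. -/

namespace DFinsupp

variable {R : Type*} [Semiring R] {ι : Type*} {A B C : ι → Type*}
  [∀ i, AddCommMonoid (A i)] [∀ i, Module R (A i)]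
  [∀ i, AddCommMonoid (B i)] [∀ i, Module R (B i)]
  [∀ i, AddCommMonoid (C i)] [∀ i, Module R (C i)]
  {N : Type*} [AddCommMonoid N] [Module R N]

theorem exact_mapRange_linearMap {f : ∀ i, A i →ₗ[R] B i} {g : ∀ i, B i →ₗ[R] C i}
    (h : ∀ i, Function.Exact (f i) (g i)) :
    Function.Exact (mapRange.linearMap f) (mapRange.linearMap g) := by
  simp_rw [LinearMap.exact_iff, ker_mapRangeLinearMap, range_mapRangeLinearMap,
    (h _).linearMap_ker_eq]

theorem comp_mapRange_linearMap_comp_lsingle [DecidableEq ι] (φ : (Π₀ i, B i) →ₗ[R] N)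
    (f : ∀ i, A i →ₗ[R] B i) (i : ι) :
    (φ ∘ₗ mapRange.linearMap f) ∘ₗ lsingle i = (φ ∘ₗ lsingle i) ∘ₗ f i := by
  ext x
  simp

theorem exact_precomp_mapRange_linearMap {f : ∀ i, A i →ₗ[R] B i} {g : ∀ i, B i →ₗ[R] C i}
    (h : ∀ i, Function.Exact (fun φ : C i →ₗ[R] N => φ ∘ₗ g i)
      (fun φ : B i →ₗ[R] N => φ ∘ₗ f i)) :
    Function.Exact (fun φ : (Π₀ i, C i) →ₗ[R] N => φ ∘ₗ mapRange.linearMap g)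
      (fun φ : (Π₀ i, B i) →ₗ[R] N => φ ∘ₗ mapRange.linearMap f) := by
  classical
  intro φ
  constructor
  · intro (hφ : φ ∘ₗ mapRange.linearMap f = 0)
    have hφi (i : ι) : (φ ∘ₗ lsingle i) ∘ₗ f i = 0 := by
      rw [← comp_mapRange_linearMap_comp_lsingle, hφ, LinearMap.zero_comp]
    choose ψ hψ using fun i => (h i (φ ∘ₗ lsingle i)).mp (hφi i)
    refine ⟨coprodMap ψ, lhom_ext' fun i => ?_⟩
    rw [comp_mapRange_linearMap_comp_lsingle, ← hψ i]
    exact congrArg (· ∘ₗ g i) (LinearMap.ext (coprodMap_apply_single ψ i))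
  · rintro ⟨ψ, rfl⟩
    refine lhom_ext' fun i => ?_
    rw [LinearMap.zero_comp, comp_mapRange_linearMap_comp_lsingle,
      comp_mapRange_linearMap_comp_lsingle]
    exact (h i).apply_apply_eq_zero (ψ ∘ₗ lsingle i)

noncomputable def kerMapRangeLinearEquiv (f : ∀ i, A i →ₗ[R] B i) :
    (Π₀ i, LinearMap.ker (f i)) ≃ₗ[R] LinearMap.ker (mapRange.linearMap f) :=
  (LinearEquiv.ofInjective (mapRange.linearMap fun i => (LinearMap.ker (f i)).subtype)
      ((mapRange_injective _ fun _ => rfl).2 fun i =>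
        (LinearMap.ker (f i)).injective_subtype)).trans
    (LinearEquiv.ofEq _ _ <| by
      simp_rw [range_mapRangeLinearMap, ker_mapRangeLinearMap, Submodule.range_subtype])

end DFinsupp

/-- A direct sum of Ding projective left `R`-modules is Ding projective. -/
theorem ding_projective_directSum (R : Type u) [Ring R]
    (ι : Type u) (M : ι → Type u) [∀ i, AddCommGroup (M i)] [∀ i, Module R (M i)]
    (hM : ∀ i, IsDingProjective R (M i)) :
    IsDingProjective R (⨁ i, M i) := by
  choose P d hproj hexact hhom hker using hM
  refine ⟨fun n => ModuleCat.of R (Π₀ i, (P i n : Type u)),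
    fun n => DFinsupp.mapRange.linearMap (fun i => d i n), fun n => ?_,
    fun n => DFinsupp.exact_mapRange_linearMap fun i => hexact i n,
    fun F _ _ hF n => DFinsupp.exact_precomp_mapRange_linearMap fun i => hhom i F hF n,
    ⟨(DFinsupp.mapRange.linearEquiv fun i => (hker i).some).trans
      (DFinsupp.kerMapRangeLinearEquiv fun i => d i (-1))⟩⟩
  have := fun i => hproj i n
  exact inferInstanceAs (Module.Projective R (Π₀ i, (P i n : Type u)))
end

section
/- Let R be an associative ring with unity and M a left R-module. Then M is strongly two-degree Ding projective if and only if there is a short exact sequence 0 → M → D → M → 0 with D Ding projective such that Hom_R(−, L) leaves this short exact sequence exact for every left R-module L of finite flat dimension. -/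
universe u

open scoped TensorProduct DirectSum

/-!
A short exact sequence `0 → M → D → M → 0` is a map `f = ι ∘ π : D → D` with `ker f = im f ≅ M`,
and `Hom(-, L)` keeps it exact iff every map `ker f → L` extends to `D`. For flat `L` this is the
`Hom(-, flat)`-exactness of `f`. It passes to `L` of finite flat dimension by induction along
`0 → K → F → L → 0` with `F` flat: a map `ker f → L` lifts to `F` because `Ext¹(ker f, K) = 0`,
by dimension shifting along `0 → ker f → D → ker f → 0` from the induction hypothesis for `K` and
`Ext¹(D, K) = 0`. The same induction, run on a complete projective resolution of the Ding
projective module `D`, gives that last vanishing.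
-/

namespace Function.Exact

variable {R : Type*} [Ring R] {A B C N : Type*} [AddCommGroup A] [Module R A]
  [AddCommGroup B] [Module R B] [AddCommGroup C] [Module R C] [AddCommGroup N] [Module R N]

lemma comp_surjective {α β γ δ : Type*} [Zero δ] {f : β → γ} {g : γ → δ} (h : Exact f g)
    {p : α → β} (hp : Surjective p) : Exact (f ∘ p) g := fun y => by
  rw [h y, hp.range_comp]

lemma exists_comp_eq_of_surjective {i : A →ₗ[R] B} {p : B →ₗ[R] C} (h : Exact i p)
    (hp : Surjective p) {g : B →ₗ[R] N} (hg : g ∘ₗ i = 0) : ∃ g' : C →ₗ[R] N, g' ∘ₗ p = g :=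
  ⟨(LinearMap.range i).liftQ g (LinearMap.range_le_ker_iff.mpr hg) ∘ₗ
      (h.linearEquivOfSurjective hp).symm.toLinearMap, by ext; simp⟩

lemma exists_comp_eq_of_injective {i : A →ₗ[R] B} {p : B →ₗ[R] C} (h : Exact i p)
    (hi : Injective i) {g : N →ₗ[R] B} (hg : p ∘ₗ g = 0) : ∃ g' : N →ₗ[R] A, i ∘ₗ g' = g := by
  have hmem (x : N) : g x ∈ LinearMap.range i := (h (g x)).1 (LinearMap.congr_fun hg x)
  refine ⟨(LinearEquiv.ofInjective i hi).symm.toLinearMap ∘ₗ g.codRestrict _ hmem, ?_⟩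
  ext x
  exact congrArg Subtype.val
    ((LinearEquiv.ofInjective i hi).apply_symm_apply (g.codRestrict _ hmem x))

lemma exact_precomp {i : A →ₗ[R] B} {p : B →ₗ[R] C} (h : Exact i p) (hp : Surjective p) :
    Exact (fun g : C →ₗ[R] N => g ∘ₗ p) (fun g : B →ₗ[R] N => g ∘ₗ i) := fun g =>
  ⟨fun hg => h.exists_comp_eq_of_surjective hp hg, by
    rintro ⟨g', rfl⟩
    show (g' ∘ₗ p) ∘ₗ i = 0
    rw [LinearMap.comp_assoc, h.linearMap_comp_eq_zero, LinearMap.comp_zero]⟩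

variable {i : A →ₗ[R] B} {g : B →ₗ[R] C} (h : Exact i g)

noncomputable def toKer : A →ₗ[R] LinearMap.ker g :=
  i.codRestrict _ h.apply_apply_eq_zero

lemma toKer_surjective : Surjective h.toKer := by
  rintro ⟨y, hy⟩
  obtain ⟨x, rfl⟩ := (h y).1 hy
  exact ⟨x, rfl⟩

lemma toKer_comp_eq_zero {f : N →ₗ[R] A} (hf : i ∘ₗ f = 0) : h.toKer ∘ₗ f = 0 := by
  ext x
  exact LinearMap.congr_fun hf x

lemma exact_subtype_toKer : Exact (LinearMap.ker i).subtype h.toKer :=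
  (Subtype.val_injective.comp_exact_iff_exact (i := (LinearMap.ker g).subtype)).1
    (LinearMap.exact_subtype_ker_map i)

end Function.Exact

open LinearMap

/-- `Ext¹_R(C, K) = 0`, in the elementary form: `C` is projective relative to every surjection
with kernel `K`. -/
def LiftsOverKernel (R : Type u) [Ring R] (C K : Type u) [AddCommGroup C] [Module R C]
    [AddCommGroup K] [Module R K] : Prop :=
  ∀ (X Y : Type u) [AddCommGroup X] [Module R X] [AddCommGroup Y] [Module R Y]
    (ι : K →ₗ[R] X) (π : X →ₗ[R] Y), Function.Injective ι → Function.Surjective π →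
      Function.Exact ι π → Function.Surjective (fun e : C →ₗ[R] X => π ∘ₗ e)

namespace LiftsOverKernel

variable {R : Type u} [Ring R] {A B C K : Type u} [AddCommGroup A] [Module R A]
  [AddCommGroup B] [Module R B] [AddCommGroup C] [Module R C] [AddCommGroup K] [Module R K]

lemma of_projective (hC : Module.Projective R C) : LiftsOverKernel R C K :=
  fun _ _ _ _ _ _ _ π _ hπ _ g => Module.projective_lifting_property π g hπ

lemma of_linearEquiv (e : A ≃ₗ[R] C) (h : LiftsOverKernel R C K) : LiftsOverKernel R A K := by
  intro X Y _ _ _ _ ι π hι hπ hιπ g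
  obtain ⟨t, ht⟩ := h X Y ι π hι hπ hιπ (g ∘ₗ e.symm.toLinearMap)
  refine ⟨t ∘ₗ e.toLinearMap, ?_⟩
  simp only at ht ⊢
  rw [← comp_assoc, ht, comp_assoc, LinearEquiv.symm_comp, comp_id]

lemma of_exact {i : A →ₗ[R] B} {p : B →ₗ[R] C} (hip : Function.Exact i p)
    (hp : Function.Surjective p) (hB : LiftsOverKernel R B K)
    (hA : Function.Surjective (fun s : B →ₗ[R] K => s ∘ₗ i)) : LiftsOverKernel R C K := by
  intro X Y _ _ _ _ ι π hι hπ hιπ w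
  obtain ⟨t, ht⟩ := hB X Y ι π hι hπ hιπ (w ∘ₗ p)
  simp only at ht
  obtain ⟨r, hr⟩ : ∃ r : A →ₗ[R] K, ι ∘ₗ r = t ∘ₗ i := hιπ.exists_comp_eq_of_injective hι <| by
    rw [← comp_assoc, ht, comp_assoc, hip.linearMap_comp_eq_zero, comp_zero]
  obtain ⟨s, rfl⟩ := hA r
  obtain ⟨e, he⟩ := hip.exists_comp_eq_of_surjective hp (g := t - ι ∘ₗ s) <| by
    rw [sub_comp, comp_assoc, hr, sub_self]
  refine ⟨e, (cancel_right hp).1 ?_⟩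
  rw [comp_assoc, he, comp_sub, ht, ← comp_assoc, hιπ.linearMap_comp_eq_zero, zero_comp,
    sub_zero]

end LiftsOverKernel

section Complex

variable {R : Type u} [Ring R] (P : ℤ → ModuleCat.{u} R)
  (d : ∀ n : ℤ, (P (n + 1) : Type u) →ₗ[R] P n) (hex : ∀ n, Function.Exact (d (n + 1)) (d n))

include hex in
lemma liftsOverKernel_ker {K : Type u} [AddCommGroup K] [Module R K]
    (hP : ∀ m, LiftsOverKernel R (P m) K)
    (hK : ∀ m, Function.Surjective
      (fun s : (P (m + 1) : Type u) →ₗ[R] K => s ∘ₗ (ker (d m)).subtype))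
    (m : ℤ) : LiftsOverKernel R (ker (d m)) K :=
  .of_exact (hex m).exact_subtype_toKer (hex m).toKer_surjective (hP (m + 1 + 1)) (hK (m + 1))

variable (hflat : ∀ (F : Type u) [AddCommGroup F] [Module R F], IsFlatModule R F →
  ∀ n : ℤ, Function.Exact
    (fun g : (P n : Type u) →ₗ[R] F => g ∘ₗ d n)
    (fun g : (P (n + 1) : Type u) →ₗ[R] F => g ∘ₗ d (n + 1)))

include hex hflat in
lemma surjective_restrict_ker_of_isFlatModule (F : Type u) [AddCommGroup F] [Module R F]
    (hF : IsFlatModule R F) (m : ℤ) :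
    Function.Surjective (fun s : (P (m + 1) : Type u) →ₗ[R] F => s ∘ₗ (ker (d m)).subtype) := by
  intro w
  obtain ⟨s, hs⟩ := (hflat F hF (m + 1) (w ∘ₗ (hex m).toKer)).1 <| by
    show (w ∘ₗ (hex m).toKer) ∘ₗ d (m + 1 + 1) = 0
    rw [comp_assoc, (hex m).toKer_comp_eq_zero (hex (m + 1)).linearMap_comp_eq_zero, comp_zero]
  exact ⟨s, (cancel_right (hex m).toKer_surjective).1 hs⟩

include hex hflat in
lemma surjective_restrict_ker_of_flatDimLE
    (hP : ∀ m n (K : ModuleCat.{u} R), FlatDimLE R n K → LiftsOverKernel R (P m) K) (n : ℕ) :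
    ∀ K : ModuleCat.{u} R, FlatDimLE R n K → ∀ m, Function.Surjective
      (fun s : (P (m + 1) : Type u) →ₗ[R] K => s ∘ₗ (ker (d m)).subtype) := by
  induction n with
  | zero => exact fun K hK => surjective_restrict_ker_of_isFlatModule P d hex hflat K hK
  | succ n ih =>
    rintro K ⟨F, K', ι, π, hF, hι, hπ, hιπ, hK'⟩ m w
    -- lift `w` to the flat module `F`, extend the lift, and project back to `K`
    obtain ⟨e, rfl⟩ := liftsOverKernel_ker P d hex (fun m => hP m n K' hK') (ih K' hK') m
      F K ι π hι hπ hιπ w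
    obtain ⟨E, rfl⟩ := surjective_restrict_ker_of_isFlatModule P d hex hflat F hF m e
    exact ⟨π ∘ₗ E, rfl⟩

end Complex

lemma IsDingProjective.liftsOverKernel {R : Type u} [Ring R] {D : Type u} [AddCommGroup D]
    [Module R D] (hD : IsDingProjective R D) {n : ℕ} {K : ModuleCat.{u} R}
    (hK : FlatDimLE R n K) : LiftsOverKernel R D K := by
  obtain ⟨P, d, hproj, hex, hflat, ⟨e⟩⟩ := hD
  have hP (m : ℤ) (L : ModuleCat.{u} R) : LiftsOverKernel R (P m) L := .of_projective (hproj m)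
  exact (liftsOverKernel_ker P d hex (hP · K) (surjective_restrict_ker_of_flatDimLE P d hex hflat
    (fun m _ L _ => hP m L) n K hK) (-1)).of_linearEquiv e

lemma surjective_restrict_ker_of_hasFiniteFlatDimension {R : Type u} [Ring R]
    {D : ModuleCat.{u} R} {f : (D : Type u) →ₗ[R] D} (hD : IsDingProjective R D)
    (hff : Function.Exact f f)
    (hflat : ∀ (F : Type u) [AddCommGroup F] [Module R F], IsFlatModule R F →
      Function.Exact (fun g : (D : Type u) →ₗ[R] F => g ∘ₗ f)
        (fun g : (D : Type u) →ₗ[R] F => g ∘ₗ f))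
    (L : Type u) [AddCommGroup L] [Module R L] (hL : HasFiniteFlatDimension R L) :
    Function.Surjective (fun s : (D : Type u) →ₗ[R] L => s ∘ₗ (ker f).subtype) :=
  let ⟨n, hn⟩ := hL
  -- the periodic complex `⋯ → D → D → ⋯` with every differential `f`
  surjective_restrict_ker_of_flatDimLE (fun _ => D) (fun _ => f) (fun _ => hff)
    (fun F _ _ hF _ => hflat F hF) (fun _ _ _ hK => hD.liftsOverKernel hK) n _ hn 0

/-- `M` is strongly two-degree Ding projective iff there is a short exact
sequence `0 → M → D → M → 0` with `D` Ding projective which stays exact under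
`Hom_R(-, L)` for every module `L` of finite flat dimension. -/
theorem strongly_twoDegree_ding_projective_iff_hom_finite_flat_dim_exact (R : Type u)
    [Ring R] (M : Type u) [AddCommGroup M] [Module R M] :
    IsStronglyTwoDegreeDingProjective R M ↔
      ∃ (D : ModuleCat.{u} R) (ι : M →ₗ[R] D) (π : (D : Type u) →ₗ[R] M),
        Function.Injective ι ∧ Function.Surjective π ∧ Function.Exact ι π ∧
        IsDingProjective R D ∧
        (∀ (L : Type u) [AddCommGroup L] [Module R L], HasFiniteFlatDimension R L →
          Function.Injective (fun g : M →ₗ[R] L => g ∘ₗ π) ∧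
          Function.Exact
            (fun g : M →ₗ[R] L => g ∘ₗ π)
            (fun g : (D : Type u) →ₗ[R] L => g ∘ₗ ι) ∧
          Function.Surjective (fun g : (D : Type u) →ₗ[R] L => g ∘ₗ ι)) := by
  constructor
  · rintro ⟨D, f, hD, hff, hflat, ⟨e⟩⟩
    let π := e.symm.toLinearMap ∘ₗ hff.toKer
    have hπ : Function.Surjective π := e.symm.surjective.comp hff.toKer_surjective
    have hιπ : Function.Exact ((ker f).subtype ∘ₗ e.toLinearMap) π :=
      LinearEquiv.postcomp_exact_iff_exact.2
        (LinearEquiv.precomp_exact_iff_exact.2 hff.exact_subtype_toKer)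
    refine ⟨D, _, π, Subtype.val_injective.comp e.injective, hπ, hιπ, hD,
      fun L _ _ hL => ⟨fun _ _ h => (cancel_right hπ).1 h, hιπ.exact_precomp hπ, fun g => ?_⟩⟩
    obtain ⟨s, hs⟩ := surjective_restrict_ker_of_hasFiniteFlatDimension hD hff hflat L hL
      (g ∘ₗ e.symm.toLinearMap)
    refine ⟨s, ?_⟩
    simp only at hs ⊢
    rw [← comp_assoc, hs, comp_assoc, LinearEquiv.symm_comp, comp_id]
  · rintro ⟨D, ι, π, hι, hπ, hιπ, hD, hhom⟩
    have hf : Function.Exact (ι ∘ₗ π) (ι ∘ₗ π) :=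
      (hιπ.comp_injective _ hι (map_zero ι)).comp_surjective hπ
    refine ⟨D, ι ∘ₗ π, hD, hf, fun F _ _ hF => ?_, ⟨(LinearEquiv.ofInjective ι hι).trans
      (LinearEquiv.ofEq _ _ ?_)⟩⟩
    · obtain ⟨hinj, hexact, hsurj⟩ := hhom F ⟨0, hF⟩
      exact (hexact.comp_injective _ hinj (zero_comp π)).comp_surjective hsurj
    · rw [hf.linearMap_ker_eq, range_comp_of_range_eq_top _ (range_eq_top.2 hπ)]
end
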